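/- arXiv:1909.02849 — 3 statements merged into one kernel-verified Lean document; each statement's English description precedes it below -/
import Mathlib

section
/- If S is a finite simple closed lattice cycle in ℤ² consisting of L cells (L even, L ≥ 8), then the number of cells strictly enclosed by S is at most (L/4 - 1)², i.e., at most ((L-4)/4)² when L ≡ 0 mod 4; in particular a cycle of 4(6m+1) cells encloses at most (6m)² cells. -/
/-- Two cells of `ℤ²` are orthogonally adjacent. -/
def CellAdj (p q : ℤ × ℤ) : Prop :=
  (p.1 - q.1).natAbs + (p.2 - q.2).natAbs = 1

/-- The set of cells strictly enclosed by a cycle `c` : cells not on the cycle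
from which every infinite (unbounded) orthogonal path must cross the cycle. -/
def Enclosed {L : ℕ} (c : Fin L → ℤ × ℤ) : Set (ℤ × ℤ) :=
  {p | p ∉ Set.range c ∧
    ∀ f : ℕ → ℤ × ℤ, f 0 = p → (∀ n, CellAdj (f n) (f (n + 1))) →
      (∀ N : ℕ, ∃ n, N ≤ (f n).1.natAbs + (f n).2.natAbs) →
      ∃ n, f n ∈ Set.range c}

/-!
An enclosed cell sees the cycle along each of its four axis-parallel rays (a straight ray is an
unbounded path), so the enclosed cells lie strictly inside the bounding box of the cycle; if the
box has side lengths `w` and `h`, there are at most `(w - 1)(h - 1)` of them. Going once around the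
cycle, the `x`-coordinate crosses each of the `w` unit levels of the box at least once upwards and
once downwards, and likewise for `y`. Each step changes exactly one coordinate, so
`2w + 2h ≤ L`, and AM-GM gives `(w - 1)(h - 1) ≤ (L/4 - 1)²`.
-/

section CyclicWalk

open Finset

variable {L : ℕ} [NeZero L] {g : Fin L → ℤ}

open Fin.NatCast in
theorem exists_up_crossing (hg : ∀ k, (g (k + 1) - g k).natAbs ≤ 1) {t : ℤ} {i j : Fin L}
    (hi : g i ≤ t) (hj : t < g j) : ∃ k, g k = t ∧ g (k + 1) = t + 1 := by
  by_contra! hno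
  have below : ∀ m : ℕ, g (i + m) ≤ t := by
    intro m
    induction m with
    | zero => simpa using hi
    | succ m ih =>
      have hstep := hg (i + m)
      have hnot := hno (i + m)
      rw [Nat.cast_succ, ← add_assoc]
      omega
  have hj_below := below (j - i).val
  rw [Fin.cast_val_eq_self, add_sub_cancel] at hj_below
  omega

theorem two_mul_toNat_sub_le_card_filter_ne (hg : ∀ k, (g (k + 1) - g k).natAbs ≤ 1)
    (i j : Fin L) : 2 * (g j - g i).toNat ≤ #{k | g (k + 1) ≠ g k} := by
  set S : Finset (Fin L) := {k | g (k + 1) ≠ g k}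
  -- a step that changes `g` crosses exactly one level, namely `min (g k) (g (k + 1))`
  have two_le_fiber :
      ∀ t ∈ Ico (g i) (g j), 2 ≤ #{k ∈ S | min (g k) (g (k + 1)) = t} := by
    intro t ht
    rw [mem_Ico] at ht
    obtain ⟨up, hup⟩ := exists_up_crossing hg (t := t) ht.1 ht.2
    obtain ⟨down, hdown⟩ := exists_up_crossing (g := fun k => -g k)
      (fun k => by have := hg k; omega) (t := -(t + 1)) (i := j) (j := i) (by omega) (by omega)
    refine one_lt_card.mpr ⟨up, ?_, down, ?_, fun h => ?_⟩
    · simp only [S, mem_filter, mem_univ, true_and]; omega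
    · simp only [S, mem_filter, mem_univ, true_and]; omega
    · subst h; omega
  calc 2 * (g j - g i).toNat = ∑ _t ∈ Ico (g i) (g j), 2 := by simp [mul_comm]
    _ ≤ ∑ t ∈ Ico (g i) (g j), #{k ∈ S | min (g k) (g (k + 1)) = t} :=
        sum_le_sum two_le_fiber
    _ = #{k ∈ S | min (g k) (g (k + 1)) ∈ Ico (g i) (g j)} :=
        sum_card_fiberwise_eq_card_filter _ _ _
    _ ≤ #S := card_filter_le _ _

end CyclicWalk

theorem CellAdj.natAbs_fst_sub_le {p q : ℤ × ℤ} (h : CellAdj p q) :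
    (q.1 - p.1).natAbs ≤ 1 := by
  unfold CellAdj at h; omega

theorem CellAdj.natAbs_snd_sub_le {p q : ℤ × ℤ} (h : CellAdj p q) :
    (q.2 - p.2).natAbs ≤ 1 := by
  unfold CellAdj at h; omega

section LatticeCycle

open Finset

variable {L : ℕ} {c : Fin L → ℤ × ℤ}

theorem card_filter_fst_ne_add_card_filter_snd_ne [NeZero L]
    (hc : ∀ k, CellAdj (c k) (c (k + 1))) :
    #{k | (c (k + 1)).1 ≠ (c k).1} + #{k | (c (k + 1)).2 ≠ (c k).2} = L := by
  have hsnd : #{k | (c (k + 1)).2 ≠ (c k).2} = #{k | ¬(c (k + 1)).1 ≠ (c k).1} := by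
    congr 1
    refine filter_congr fun k _ => ?_
    have := hc k
    unfold CellAdj at this
    omega
  rw [hsnd, card_filter_add_card_filter_not, card_univ, Fintype.card_fin]

theorem exists_pos_ray_mem_range_of_mem_enclosed {p : ℤ × ℤ} (hp : p ∈ Enclosed c)
    {v : ℤ × ℤ} (hv : v.1.natAbs + v.2.natAbs = 1) :
    ∃ n : ℕ, 0 < n ∧ (p.1 + n * v.1, p.2 + n * v.2) ∈ Set.range c := by
  obtain ⟨hpc, hescape⟩ := hp
  have hunbounded : ∀ N : ℕ, ∃ n : ℕ,
      N ≤ (p.1 + n * v.1).natAbs + (p.2 + n * v.2).natAbs := by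
    intro N
    refine ⟨N + p.1.natAbs + p.2.natAbs, ?_⟩
    obtain ⟨v₁, v₂⟩ := v
    obtain ⟨rfl, rfl⟩ | ⟨rfl, rfl⟩ | ⟨rfl, rfl⟩ | ⟨rfl, rfl⟩ :
        (v₁ = 1 ∧ v₂ = 0) ∨ (v₁ = -1 ∧ v₂ = 0) ∨
          (v₁ = 0 ∧ v₂ = 1) ∨ (v₁ = 0 ∧ v₂ = -1) := by
      omega
    all_goals simp only [mul_one, mul_zero, mul_neg_one, add_zero]; omega
  obtain ⟨n, hn⟩ := hescape (fun n : ℕ => (p.1 + n * v.1, p.2 + n * v.2)) (by simp)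
    (fun n => by unfold CellAdj; push_cast; ring_nf; omega) hunbounded
  rcases Nat.eq_zero_or_pos n with rfl | hpos
  · exact absurd (by simpa using hn) hpc
  · exact ⟨n, hpos, hn⟩

theorem enclosed_subset_Ioo_prod_Ioo {a₁ b₁ a₂ b₂ : ℤ}
    (h₁ : ∀ k, (c k).1 ∈ Set.Icc a₁ b₁) (h₂ : ∀ k, (c k).2 ∈ Set.Icc a₂ b₂) :
    Enclosed c ⊆ ↑(Finset.Ioo a₁ b₁ ×ˢ Finset.Ioo a₂ b₂) := by
  intro p hp
  have ray := fun v hv => exists_pos_ray_mem_range_of_mem_enclosed hp (v := v) hv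
  obtain ⟨nl, hnl, kl, hl⟩ := ray (-1, 0) (by simp)
  obtain ⟨nr, hnr, kr, hr⟩ := ray (1, 0) (by simp)
  obtain ⟨nd, hnd, kd, hd⟩ := ray (0, -1) (by simp)
  obtain ⟨nu, hnu, ku, hu⟩ := ray (0, 1) (by simp)
  have hkl := h₁ kl; have hkr := h₁ kr; have hkd := h₂ kd; have hku := h₂ ku
  rw [Set.mem_Icc] at hkl hkr hkd hku
  simp only [Prod.ext_iff, mul_one, mul_zero, mul_neg_one, add_zero] at hl hr hd hu
  simp only [coe_product, coe_Ioo, Set.mem_prod, Set.mem_Ioo]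
  omega

theorem ncard_enclosed_le_mul {a₁ b₁ a₂ b₂ : ℤ}
    (h₁ : ∀ k, (c k).1 ∈ Set.Icc a₁ b₁) (h₂ : ∀ k, (c k).2 ∈ Set.Icc a₂ b₂) :
    (Enclosed c).ncard ≤ (b₁ - a₁ - 1).toNat * (b₂ - a₂ - 1).toNat := by
  calc (Enclosed c).ncard ≤ #(Finset.Ioo a₁ b₁ ×ˢ Finset.Ioo a₂ b₂) := by
        rw [← Set.ncard_coe_finset]
        exact Set.ncard_le_ncard (enclosed_subset_Ioo_prod_Ioo h₁ h₂) (Finset.finite_toSet _)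
    _ = _ := by rw [card_product, Int.card_Ioo, Int.card_Ioo]

theorem sub_one_mul_sub_one_le_sq {w h L : ℕ} (hL : 2 * w + 2 * h ≤ L) :
    (((w - 1) * (h - 1) : ℕ) : ℝ) ≤ ((L : ℝ) / 4 - 1) ^ 2 := by
  rcases Nat.eq_zero_or_pos w with rfl | hw
  · simpa using sq_nonneg _
  rcases Nat.eq_zero_or_pos h with rfl | hh
  · simpa using sq_nonneg _
  have hL' : 2 * (w : ℝ) + 2 * h ≤ L := by exact_mod_cast hL
  have hw' : (1 : ℝ) ≤ w := by exact_mod_cast hw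
  have hh' : (1 : ℝ) ≤ h := by exact_mod_cast hh
  push_cast [Nat.cast_sub hw, Nat.cast_sub hh]
  nlinarith [sq_nonneg ((w : ℝ) - h)]

theorem ncard_enclosed_le_sq [NeZero L] (hc : ∀ k, CellAdj (c k) (c (k + 1))) :
    ((Enclosed c).ncard : ℝ) ≤ ((L : ℝ) / 4 - 1) ^ 2 := by
  obtain ⟨i₁, -, hi₁⟩ := exists_min_image univ (fun k => (c k).1) univ_nonempty
  obtain ⟨j₁, -, hj₁⟩ := exists_max_image univ (fun k => (c k).1) univ_nonempty
  obtain ⟨i₂, -, hi₂⟩ := exists_min_image univ (fun k => (c k).2) univ_nonempty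
  obtain ⟨j₂, -, hj₂⟩ := exists_max_image univ (fun k => (c k).2) univ_nonempty
  have hbox := ncard_enclosed_le_mul (fun k => ⟨hi₁ k (mem_univ k), hj₁ k (mem_univ k)⟩)
    (fun k => ⟨hi₂ k (mem_univ k), hj₂ k (mem_univ k)⟩)
  have hwidth : 2 * ((c j₁).1 - (c i₁).1).toNat ≤ #{k | (c (k + 1)).1 ≠ (c k).1} :=
    two_mul_toNat_sub_le_card_filter_ne (g := fun k => (c k).1)
      (fun k => (hc k).natAbs_fst_sub_le) i₁ j₁
  have hheight : 2 * ((c j₂).2 - (c i₂).2).toNat ≤ #{k | (c (k + 1)).2 ≠ (c k).2} :=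
    two_mul_toNat_sub_le_card_filter_ne (g := fun k => (c k).2)
      (fun k => (hc k).natAbs_snd_sub_le) i₂ j₂
  have hperimeter := card_filter_fst_ne_add_card_filter_snd_ne hc
  calc ((Enclosed c).ncard : ℝ)
      ≤ ((((c j₁).1 - (c i₁).1).toNat - 1) *
          (((c j₂).2 - (c i₂).2).toNat - 1) : ℕ) := by
        gcongr
        exact hbox.trans_eq (by congr 1 <;> omega)
    _ ≤ _ := by apply sub_one_mul_sub_one_le_sq; omega

end LatticeCycle

/-- Discrete isoperimetric inequality: a simple closed lattice cycle of `L` cells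
(`L` even, `L ≥ 8`) strictly encloses at most `(L/4 − 1)²` cells; in particular
a cycle of `4(6m+1)` cells encloses at most `(6m)²` cells. -/
theorem stmt_2 (L : ℕ) (hL : 8 ≤ L)
    (c : Fin L → ℤ × ℤ)
    (hadj : ∀ i : Fin L, CellAdj (c i) (c (i + ⟨1, by omega⟩))) :
    ((Enclosed c).ncard : ℝ) ≤ ((L : ℝ) / 4 - 1) ^ 2 ∧
    (L % 4 = 0 → (Enclosed c).ncard ≤ ((L - 4) / 4) ^ 2) ∧
    (∀ m : ℕ, L = 4 * (6 * m + 1) → (Enclosed c).ncard ≤ (6 * m) ^ 2) := by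
  have : NeZero L := ⟨by omega⟩
  have hone : (⟨1, by omega⟩ : Fin L) = 1 := Fin.ext (Nat.mod_eq_of_lt (by omega)).symm
  have hbound : ((Enclosed c).ncard : ℝ) ≤ ((L : ℝ) / 4 - 1) ^ 2 :=
    ncard_enclosed_le_sq fun i => hone ▸ hadj i
  have hsq : ∀ K : ℕ, L = 4 * K + 4 → (Enclosed c).ncard ≤ K ^ 2 := by
    rintro K rfl
    have hK : ((4 * K + 4 : ℕ) : ℝ) / 4 - 1 = K := by push_cast; ring
    exact_mod_cast hK ▸ hbound
  exact ⟨hbound, fun _ => hsq _ (by omega), fun m hm => hsq _ (by omega)⟩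
end

section
/- The total score of any K-tiling is bounded above by the sum over all colors c of (number of placed cells with color c) × (number of crowns on placed cells of color c), with equality if and only if every color with at least one crown forms a single monochromatic connected region. -/
open Finset

/-!
Summing over regions and over colours both amount to summing, cell by cell, the crowns of a
cell weighted by the size of the class containing it. Regions refine colours, so the region of a
cell lies inside its colour class and the score is termwise dominated. Equality holds iff every
crowned cell's region is its whole colour class, i.e. iff each crowned colour is one region.
-/

section Fiber

variable {α ι κ : Type*} [Fintype α] [DecidableEq ι] [DecidableEq κ]

lemma sum_image_card_filter_mul_sum (f : α → ι) (w : α → ℕ) :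
    ∑ r ∈ univ.image f, #{a | f a = r} * ∑ a with f a = r, w a =
      ∑ a, #{b | f b = f a} * w a := by
  rw [← sum_fiberwise_of_maps_to (fun a _ => mem_image_of_mem f (mem_univ a))]
  refine sum_congr rfl fun r _ => ?_
  rw [mul_sum]
  refine sum_congr rfl fun a ha => ?_
  rw [(mem_filter.mp ha).2]

lemma filter_eq_subset_filter_eq_of_factor {g : α → ι} {f : α → κ}
    (hgf : ∀ a b, g a = g b → f a = f b) (a : α) :
    univ.filter (fun b => g b = g a) ⊆ univ.filter fun b => f b = f a := by
  intro b hb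
  simp only [mem_filter, mem_univ, true_and] at hb ⊢
  exact hgf b a hb

lemma card_mul_eq_card_mul_iff_of_subset {β : Type*} {s t : Finset β} (hst : s ⊆ t) (n : ℕ) :
    #s * n = #t * n ↔ (0 < n → s = t) := by
  rcases Nat.eq_zero_or_pos n with rfl | hn
  · simp
  · rw [Nat.mul_left_inj hn.ne', ← eq_iff_card_le_of_subset hst]
    exact ⟨fun h _ => h.ge, fun h => le_antisymm (card_le_card hst) (h hn)⟩

lemma filter_eq_eq_filter_eq_iff_of_factor {g : α → ι} {f : α → κ}
    (hgf : ∀ a b, g a = g b → f a = f b) (a : α) :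
    univ.filter (fun b => g b = g a) = univ.filter (fun b => f b = f a) ↔
      ∀ b, f b = f a → g b = g a := by
  simp only [Finset.ext_iff, mem_filter, mem_univ, true_and]
  exact ⟨fun h b => (h b).2, fun h b => ⟨hgf b a, h b⟩⟩

lemma sum_card_filter_mul_le_of_factor {g : α → ι} {f : α → κ}
    (hgf : ∀ a b, g a = g b → f a = f b) (w : α → ℕ) :
    ∑ a, #{b | g b = g a} * w a ≤ ∑ a, #{b | f b = f a} * w a :=
  sum_le_sum fun a _ =>
    Nat.mul_le_mul_right _ (card_le_card (filter_eq_subset_filter_eq_of_factor hgf a))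

lemma sum_card_filter_mul_eq_iff_of_factor {g : α → ι} {f : α → κ}
    (hgf : ∀ a b, g a = g b → f a = f b) (w : α → ℕ) :
    ∑ a, #{b | g b = g a} * w a = ∑ a, #{b | f b = f a} * w a ↔
      ∀ a, 0 < w a → ∀ b, f b = f a → g b = g a := by
  rw [sum_eq_sum_iff_of_le fun a _ =>
    Nat.mul_le_mul_right _ (card_le_card (filter_eq_subset_filter_eq_of_factor hgf a))]
  simp only [mem_univ, true_implies]
  refine forall_congr' fun a => ?_
  rw [card_mul_eq_card_mul_iff_of_subset (filter_eq_subset_filter_eq_of_factor hgf a),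
    filter_eq_eq_filter_eq_iff_of_factor hgf a]

end Fiber

/-- Abstract score bound for K-tilings. Cells (a finite type) each carry a
color and a crown count; `comp` assigns each cell its monochromatic connected
component (so `comp` refines `color`). The score (sum over components of
size × crowns) is at most the sum over colors of
(number of cells of that color) × (crowns of that color), with equality iff
every color carrying at least one crown has all its cells in a single
component. -/
theorem stmt_5 {Cell C ι : Type*} [Fintype Cell] [DecidableEq C] [DecidableEq ι]
    (color : Cell → C) (crown : Cell → ℕ) (comp : Cell → ι)
    (hrefine : ∀ a b, comp a = comp b → color a = color b) :
    (∑ r ∈ univ.image comp,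
        (univ.filter fun a => comp a = r).card *
          ∑ a ∈ univ.filter (fun a => comp a = r), crown a) ≤
      (∑ c ∈ univ.image color,
        (univ.filter fun a => color a = c).card *
          ∑ a ∈ univ.filter (fun a => color a = c), crown a) ∧
    ((∑ r ∈ univ.image comp,
        (univ.filter fun a => comp a = r).card *
          ∑ a ∈ univ.filter (fun a => comp a = r), crown a) =
      (∑ c ∈ univ.image color,
        (univ.filter fun a => color a = c).card *
          ∑ a ∈ univ.filter (fun a => color a = c), crown a) ↔
      ∀ c : C, 0 < (∑ a ∈ univ.filter (fun a => color a = c), crown a) →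
        ∀ a b : Cell, color a = c → color b = c → comp a = comp b) := by
  rw [sum_image_card_filter_mul_sum comp, sum_image_card_filter_mul_sum color,
    sum_card_filter_mul_eq_iff_of_factor hrefine]
  refine ⟨sum_card_filter_mul_le_of_factor hrefine crown, ⟨?_, ?_⟩⟩
  · intro h c hc a b ha hb
    obtain ⟨x, hx, hx_pos⟩ := sum_pos_iff.mp hc
    have hx : color x = c := (mem_filter.mp hx).2
    exact (h x hx_pos a (ha.trans hx.symm)).trans (h x hx_pos b (hb.trans hx.symm)).symm
  · intro h a ha b hb
    exact h (color a) (sum_pos_iff.mpr ⟨a, by simp, ha⟩) b a hb rfl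
end

section
/- Strategy stealing for the two-player domino-picking game from empty boards: in the two-stage game where players alternately pick dominoes from a finite multiset τ to build sequences τ'_1, τ'_2 and then each maximizes their own score independently, if the game value is determined (every play yields a winner or draw) and positions are symmetric at the start, then the second player cannot have a winning strategy. -/
/-
Player 1 takes an arbitrary domino `x` and then plays the supposed winning strategy of
player 2 in an imaginary game in which the roles are swapped and `x` is still in the pool;
whenever that strategy asks for `x`, which player 1 already holds, player 1 takes an
arbitrary domino instead. Throughout, player 1 holds a superset of what the imaginary second
player holds, so by monotonicity of `score` player 1 beats player 2 in the real game,
contradicting that player 2 wins it.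
-/

/-- `P2Win score n turn A B R` : in the alternating domino-picking game where
`A` is player 1's picked set, `B` is player 2's, `R` is the remaining pool,
`turn = true` means player 1 to move, and `n` moves remain, player 2 can force
a win (i.e. end with a strictly greater optimal score, `score` giving the best
achievable final score from a picked set of dominoes). -/
def P2Win {D : Type*} [DecidableEq D] (score : Finset D → ℕ) :
    ℕ → Bool → Finset D → Finset D → Finset D → Prop
  | 0, _, A, B, _ => score A < score B
  | n + 1, true, A, B, R => ∀ d ∈ R, P2Win score n false (insert d A) B (R.erase d)
  | n + 1, false, A, B, R => ∃ d ∈ R, P2Win score n true A (insert d B) (R.erase d)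

section

variable {D : Type*} [DecidableEq D] {score : Finset D → ℕ}

theorem P2Win.mono_right (hmono : Monotone score) {n : ℕ} {t : Bool} {A B B' R : Finset D}
    (h : P2Win score n t A B R) (hB : B ⊆ B') : P2Win score n t A B' R := by
  induction n generalizing t A B B' R with
  | zero => exact h.trans_le (hmono hB)
  | succ n ih =>
    cases t with
    | true => exact fun d hd => ih (h d hd) hB
    | false =>
      obtain ⟨d, hd, h⟩ := h
      exact ⟨d, hd, ih h (Finset.insert_subset_insert d hB)⟩

/-- The invariant of the stolen strategy: `P2Win … B A (insert x R)` is the imaginary game, in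
which player 1 (holding `A`) plays second and `x ∈ A` is back in the pool. -/
theorem not_p2Win_of_p2Win_swap_insert (hmono : Monotone score) {b : Bool} {A B R : Finset D}
    {x : D} (hxA : x ∈ A) (hxR : x ∉ R) (h : P2Win score (R.card + 1) (!b) B A (insert x R)) :
    ¬ P2Win score R.card b A B R := by
  induction hn : R.card generalizing b A B R x with
  | zero =>
    obtain rfl : R = ∅ := Finset.card_eq_zero.mp hn
    cases b with
    | false =>
      intro hreal
      have himag : score (insert x B) < score A := h x (Finset.mem_insert_self x ∅)
      exact (hreal.trans_le (hmono (Finset.subset_insert x B))).not_gt himag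
    | true =>
      rintro (hreal : score A < score B)
      obtain ⟨e, he, himag⟩ := h
      obtain rfl : e = x := Finset.mem_singleton.mp he
      exact hreal.not_gt (by rwa [Finset.insert_eq_of_mem hxA] at himag)
  | succ n ih =>
    rw [hn] at h
    have hcard {d : D} (hd : d ∈ R) : (R.erase d).card = n := by
      rw [Finset.card_erase_of_mem hd, hn, Nat.add_sub_cancel]
    have herase {d : D} (hd : d ∈ R) : (insert x R).erase d = insert x (R.erase d) :=
      Finset.erase_insert_of_ne (ne_of_mem_of_not_mem hd hxR).symm
    cases b with
    | false =>
      rintro ⟨d, hd, hreal⟩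
      have himag := h d (Finset.mem_insert_of_mem hd)
      rw [herase hd, ← hcard hd] at himag
      exact ih hxA (fun hx => hxR (Finset.mem_of_mem_erase hx)) himag (hcard hd) hreal
    | true =>
      intro hreal
      obtain ⟨e, he, himag⟩ := h
      rcases Finset.mem_insert.mp he with rfl | heR
      · -- the imaginary strategy asks for `e`, already held: take any `f ∈ R` instead
        rw [Finset.erase_insert hxR, Finset.insert_eq_of_mem hxA] at himag
        obtain ⟨f, hf⟩ := Finset.card_pos.mp (by omega : 0 < R.card)
        rw [← Finset.insert_erase hf, ← hcard hf] at himag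
        exact ih (b := false) (Finset.mem_insert_self f A) (Finset.notMem_erase f R)
          (himag.mono_right hmono (Finset.subset_insert f A)) (hcard hf) (hreal f hf)
      · rw [herase heR, ← hcard heR] at himag
        exact ih (b := false) (Finset.mem_insert_of_mem hxA)
          (fun hx => hxR (Finset.mem_of_mem_erase hx)) himag (hcard heR) (hreal e heR)

end

theorem stmt_19_general {D : Type*} [DecidableEq D] (score : Finset D → ℕ)
    (hmono : ∀ A B : Finset D, A ⊆ B → score A ≤ score B)
    (τ : Finset D) :
    ¬ P2Win score τ.card true ∅ ∅ τ := by
  intro H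
  rcases τ.eq_empty_or_nonempty with rfl | ⟨x, hx⟩
  · exact lt_irrefl (score ∅) H
  have hmono' : Monotone score := fun A B => hmono A B
  have hcard : τ.card = (τ.erase x).card + 1 := (Finset.card_erase_add_one hx).symm
  rw [hcard] at H
  have himag : P2Win score ((τ.erase x).card + 1) true ∅ {x} (insert x (τ.erase x)) := by
    rw [Finset.insert_erase hx]
    exact H.mono_right hmono' (Finset.empty_subset _)
  exact not_p2Win_of_p2Win_swap_insert (b := false) hmono' (Finset.mem_singleton_self x)
    (Finset.notMem_erase x τ) himag (H x hx)

/-- Strategy stealing: in the symmetric two-player picking game starting from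
empty boards, where both players share the same monotone payoff `score`
(an extra picked domino never decreases one's optimal achievable score) and
the winner is the player with strictly greater score, the second player has
no winning strategy. -/
theorem stmt_19 {D : Type*} [DecidableEq D] (score : Finset D → ℕ)
    (hmono : ∀ A B : Finset D, A ⊆ B → score A ≤ score B)
    (τ : Finset D) (heven : Even τ.card) :
    ¬ P2Win score τ.card true ∅ ∅ τ :=
  stmt_19_general score hmono τ
end
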